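/- arXiv:2104.01223 — 3 statements merged into one kernel-verified Lean document; each statement's English description precedes it below -/
import Mathlib

section
/- There exist positive real constants C₁ and C₂ such that for all integers p ≥ 0 and q > p + 4, C₁ ≤ ((1/6)(p+1)(p+2)(q−1)q + (q−p−4)² − (2/3)(p+1)q(q−p−4) + (q−p−4)) / (1 + p + q + 2pq)² ≤ C₂. -/
lemma stmt1_lower (p k : ℝ) (hp : 0 ≤ p) (hk : 0 ≤ k) :
    (2*p^2+2*p*k+12*p+k+6)^2 ≤ 31 * ((1/6)*(p+1)*(p+2)*(p+k+4)*(p+k+5)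
      + (k+1)^2 - (2/3)*(p+1)*(p+k+5)*(k+1) + (k+1)) := by
  nlinarith [sq_nonneg (p*k - 55/14*k), mul_nonneg hp hk, mul_nonneg (mul_nonneg hp hp) hp,
    mul_nonneg (mul_nonneg hp hp) hk, mul_nonneg (mul_nonneg (mul_nonneg hp hp) hp) hk,
    sq_nonneg (p - 3), mul_nonneg (mul_nonneg hp hk) hk, sq_nonneg k, sq_nonneg p,
    mul_nonneg (sq_nonneg (p-3)) hk, mul_nonneg hk (sq_nonneg (p-3))]

lemma stmt1_upper (p k : ℝ) (hp : 0 ≤ p) (hk : 0 ≤ k) :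
    (1/6)*(p+1)*(p+2)*(p+k+4)*(p+k+5) + (k+1)^2 - (2/3)*(p+1)*(p+k+5)*(k+1) + (k+1)
      ≤ (2*p^2+2*p*k+12*p+k+6)^2 := by
  nlinarith [mul_nonneg hp hk, mul_nonneg (mul_nonneg hp hp) hp, sq_nonneg p, sq_nonneg k,
    mul_nonneg (mul_nonneg hp hp) hk, mul_nonneg (mul_nonneg hp hk) hk,
    mul_nonneg (mul_nonneg (mul_nonneg hp hp) hk) hk,
    mul_nonneg (mul_nonneg (mul_nonneg hp hp) hp) hk,
    mul_nonneg (mul_nonneg (mul_nonneg hp hp) hp) hp]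

/-- Eigenvalue comparison off the critical diagonal: there exist `C₁, C₂ > 0` with
`C₁ ≤ S(p,q)/(1+p+q+2pq)² ≤ C₂` for all `p ≥ 0`, `q > p+4`. -/
theorem stmt1 :
    ∃ C₁ C₂ : ℝ, 0 < C₁ ∧ 0 < C₂ ∧
      ∀ p q : ℕ, q > p + 4 →
        C₁ ≤ ((1/6 : ℝ) * ((p:ℝ)+1) * ((p:ℝ)+2) * ((q:ℝ)-1) * (q:ℝ)
              + ((q:ℝ)-(p:ℝ)-4)^2 - (2/3) * ((p:ℝ)+1) * (q:ℝ) * ((q:ℝ)-(p:ℝ)-4)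
              + ((q:ℝ)-(p:ℝ)-4))
            / (1 + (p:ℝ) + (q:ℝ) + 2*(p:ℝ)*(q:ℝ))^2 ∧
        ((1/6 : ℝ) * ((p:ℝ)+1) * ((p:ℝ)+2) * ((q:ℝ)-1) * (q:ℝ)
              + ((q:ℝ)-(p:ℝ)-4)^2 - (2/3) * ((p:ℝ)+1) * (q:ℝ) * ((q:ℝ)-(p:ℝ)-4)
              + ((q:ℝ)-(p:ℝ)-4))
            / (1 + (p:ℝ) + (q:ℝ) + 2*(p:ℝ)*(q:ℝ))^2 ≤ C₂ := by
  refine ⟨1/31, 1, by norm_num, by norm_num, fun p q hq => ?_⟩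
  have hq' : p + 5 ≤ q := hq
  have hqr : (p:ℝ) + 5 ≤ (q:ℝ) := by exact_mod_cast hq'
  set P : ℝ := (p:ℝ) with hP
  set k : ℝ := (q:ℝ) - P - 5 with hk
  have hPnn : 0 ≤ P := Nat.cast_nonneg p
  have hknn : 0 ≤ k := by simp only [hk]; linarith
  have hQ : (q:ℝ) = P + k + 5 := by simp only [hk]; ring
  have hd : (1 + P + (q:ℝ) + 2*P*(q:ℝ)) = 2*P^2+2*P*k+12*P+k+6 := by
    rw [hQ]; ring
  have hdpos : (0:ℝ) < (1 + P + (q:ℝ) + 2*P*(q:ℝ))^2 := by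
    rw [hd]; positivity
  have hSform : (1/6 : ℝ) * (P+1) * (P+2) * ((q:ℝ)-1) * (q:ℝ)
        + ((q:ℝ)-P-4)^2 - (2/3) * (P+1) * (q:ℝ) * ((q:ℝ)-P-4) + ((q:ℝ)-P-4)
      = (1/6)*(P+1)*(P+2)*(P+k+4)*(P+k+5) + (k+1)^2 - (2/3)*(P+1)*(P+k+5)*(k+1) + (k+1) := by
    rw [hQ]; ring
  constructor
  · rw [le_div_iff₀ hdpos]
    rw [hSform, hd]
    have := stmt1_lower P k hPnn hknn
    linarith
  · rw [div_le_iff₀ hdpos]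
    rw [hSform, hd]
    have := stmt1_upper P k hPnn hknn
    linarith
end

section
/- For every integer p ≥ 0, the function q ↦ (1/6)(p+1)(p+2)(q−1)q + (q−p−4)² − (2/3)(p+1)q(q−p−4) + (q−p−4) − (1/48)(1 + p + q + 2pq)², viewed as a real quadratic polynomial in q, has positive leading coefficient and is positive for all real q. -/
/-- For each nonnegative integer `p`, the quadratic (in the real variable `q`)
`R(p,q) = S(p,q) − (1/48)(1+p+q+2pq)²` has positive leading coefficient and is
positive for all real `q`. -/
theorem stmt6 (p : ℕ) :
    ∃ a b c : ℝ, 0 < a ∧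
      (∀ q : ℝ,
        (1/6 : ℝ) * ((p:ℝ)+1) * ((p:ℝ)+2) * (q-1) * q
          + (q-(p:ℝ)-4)^2 - (2/3) * ((p:ℝ)+1) * q * (q-(p:ℝ)-4) + (q-(p:ℝ)-4)
          - (1/48) * (1 + (p:ℝ) + q + 2*(p:ℝ)*q)^2
        = a * q^2 + b * q + c) ∧
      (∀ q : ℝ,
        0 < (1/6 : ℝ) * ((p:ℝ)+1) * ((p:ℝ)+2) * (q-1) * q
          + (q-(p:ℝ)-4)^2 - (2/3) * ((p:ℝ)+1) * q * (q-(p:ℝ)-4) + (q-(p:ℝ)-4)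
          - (1/48) * (1 + (p:ℝ) + q + 2*(p:ℝ)*q)^2) := by
  set x : ℝ := (p : ℝ) with hxdef
  have hx : 0 ≤ x := Nat.cast_nonneg p
  set a : ℝ := x^2/12 - x/4 + 31/48 with ha
  set b : ℝ := 5*x^2/12 + 17*x/24 - 113/24 with hb
  set c : ℝ := 47*x^2/48 + 167*x/24 + 575/48 with hc
  have hapos : 0 < a := by rw [ha]; nlinarith [sq_nonneg (2*x - 3)]
  refine ⟨a, b, c, hapos, fun q => by rw [ha, hb, hc]; ring, fun q => ?_⟩
  have heq : (1/6 : ℝ) * (x+1) * (x+2) * (q-1) * q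
          + (q-x-4)^2 - (2/3) * (x+1) * q * (q-x-4) + (q-x-4)
          - (1/48) * (1 + x + q + 2*x*q)^2 = a * q^2 + b * q + c := by
    rw [ha, hb, hc]; ring
  rw [heq]
  have key : 0 < 4 * a * (a * q^2 + b * q + c) := by
    have h1 : 4 * a * (a * q^2 + b * q + c)
        = (2*a*q + b)^2 + (79/9 + 38/3*x + 215/72*x^2 + 3/4*x^3 + 11/72*x^4) := by
      rw [ha, hb, hc]; ring
    rw [h1]
    nlinarith [sq_nonneg (2*a*q + b), pow_nonneg hx 2, pow_nonneg hx 3, pow_nonneg hx 4, hx]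
  nlinarith [key, hapos]
end

section
/- The operator (Z₁)²(Z_{1̄})² acts on each spherical harmonic space H_{p,q} by the scalar (p+1)(p+2)(q−1)q; in particular it vanishes on H_{p,0} and H_{p,1} and is injective on H_{p,q} for q ≥ 2. -/
/-!
With `E = z∂_z + w∂_w`, `Ē = z̄∂_z̄ + w̄∂_w̄` and `Δ = ∂_z∂_z̄ + ∂_w∂_w̄`, one has the
commutation relations `[E, Z_{1̄}] = Z_{1̄}`, `[Ē, Z_{1̄}] = -Z_{1̄}`, `[Δ, Z_{1̄}] = 0`, so
`Z_{1̄}` maps harmonic polynomials of bidegree `(p, q)` to harmonic polynomials of bidegree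
`(p + 1, q - 1)`, and the factorisation `Z₁ Z_{1̄} = (|z|² + |w|²) Δ - (E + 1) Ē`.
Hence `Z₁ Z_{1̄}` acts on harmonic polynomials of bidegree `(p, q)` by `-(p + 1) q`; applying
this at `(p + 1, q - 1)` and then at `(p, q)` gives `(p + 1)(p + 2)(q - 1) q`. The identity
already holds in the polynomial ring, before restricting to the sphere.
-/

open MvPolynomial

theorem MvPolynomial.pderiv_pderiv_comm {R σ : Type*} [CommSemiring R] (i j : σ)
    (f : MvPolynomial σ R) : pderiv i (pderiv j f) = pderiv j (pderiv i f) := by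
  classical
  induction f using MvPolynomial.induction_on with
  | C a => simp
  | add f g hf hg => simp [hf, hg]
  | mul_X f k hf =>
    simp only [pderiv_mul, map_add, pderiv_X, hf]
    rcases eq_or_ne k i with rfl | hki <;> rcases eq_or_ne k j with rfl | hkj <;> simp [*]

namespace Sphere3

variable {R : Type*} [CommRing R]

-- Coordinates: `z = X 0`, `w = X 1`, `z̄ = X 2`, `w̄ = X 3`.
noncomputable def Z (v : MvPolynomial (Fin 4) R) : MvPolynomial (Fin 4) R :=
  X 3 * pderiv 0 v - X 2 * pderiv 1 v

noncomputable def Zbar (v : MvPolynomial (Fin 4) R) : MvPolynomial (Fin 4) R :=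
  X 1 * pderiv 2 v - X 0 * pderiv 3 v

noncomputable def holEuler (v : MvPolynomial (Fin 4) R) : MvPolynomial (Fin 4) R :=
  X 0 * pderiv 0 v + X 1 * pderiv 1 v

noncomputable def antiEuler (v : MvPolynomial (Fin 4) R) : MvPolynomial (Fin 4) R :=
  X 2 * pderiv 2 v + X 3 * pderiv 3 v

noncomputable def laplacian (v : MvPolynomial (Fin 4) R) : MvPolynomial (Fin 4) R :=
  pderiv 2 (pderiv 0 v) + pderiv 3 (pderiv 1 v)

theorem Z_C_mul (c : R) (v : MvPolynomial (Fin 4) R) : Z (C c * v) = C c * Z v := by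
  simp only [Z, pderiv_C_mul]; ring

theorem Zbar_C_mul (c : R) (v : MvPolynomial (Fin 4) R) : Zbar (C c * v) = C c * Zbar v := by
  simp only [Zbar, pderiv_C_mul]; ring

theorem holEuler_C_mul (c : R) (v : MvPolynomial (Fin 4) R) :
    holEuler (C c * v) = C c * holEuler v := by
  simp only [holEuler, pderiv_C_mul]; ring

theorem holEuler_Zbar (v : MvPolynomial (Fin 4) R) :
    holEuler (Zbar v) = Zbar (holEuler v) + Zbar v := by
  simp only [holEuler, Zbar, map_add, map_sub, Derivation.leibniz, smul_eq_mul, pderiv_X,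
    Pi.single_eq_same, Pi.single_eq_of_ne, ne_eq, Fin.reduceEq, not_false_eq_true, mul_zero,
    add_zero, mul_one, pderiv_pderiv_comm]
  ring

theorem antiEuler_Zbar (v : MvPolynomial (Fin 4) R) :
    antiEuler (Zbar v) = Zbar (antiEuler v) - Zbar v := by
  simp only [antiEuler, Zbar, map_add, map_sub, Derivation.leibniz, smul_eq_mul, pderiv_X,
    Pi.single_eq_same, Pi.single_eq_of_ne, ne_eq, Fin.reduceEq, not_false_eq_true, mul_zero,
    add_zero, mul_one, pderiv_pderiv_comm]
  ring

theorem laplacian_Zbar (v : MvPolynomial (Fin 4) R) : laplacian (Zbar v) = Zbar (laplacian v) := by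
  simp only [laplacian, Zbar, map_add, map_sub, Derivation.leibniz, smul_eq_mul, pderiv_X,
    Pi.single_eq_same, Pi.single_eq_of_ne, ne_eq, Fin.reduceEq, not_false_eq_true, mul_zero,
    add_zero, mul_one, pderiv_pderiv_comm]
  ring

theorem Z_Zbar (v : MvPolynomial (Fin 4) R) :
    Z (Zbar v) = (X 0 * X 2 + X 1 * X 3) * laplacian v - holEuler (antiEuler v) - antiEuler v := by
  simp only [Z, Zbar, laplacian, holEuler, antiEuler, map_add, map_sub, Derivation.leibniz,
    smul_eq_mul, pderiv_X, Pi.single_eq_same, Pi.single_eq_of_ne, ne_eq, Fin.reduceEq,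
    not_false_eq_true, mul_zero, add_zero, mul_one, pderiv_pderiv_comm]
  ring

theorem holEuler_eq_of_isWeightedHomogeneous {p : ℕ} {v : MvPolynomial (Fin 4) R}
    (h : v.IsWeightedHomogeneous ![1, 1, 0, 0] p) : holEuler v = C (p : R) * v := by
  simpa [holEuler, Fin.sum_univ_four, nsmul_eq_mul] using h.sum_weight_X_mul_pderiv

theorem antiEuler_eq_of_isWeightedHomogeneous {q : ℕ} {v : MvPolynomial (Fin 4) R}
    (h : v.IsWeightedHomogeneous ![0, 0, 1, 1] q) : antiEuler v = C (q : R) * v := by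
  simpa [antiEuler, Fin.sum_univ_four, nsmul_eq_mul] using h.sum_weight_X_mul_pderiv

-- The eigenvalues live in `R`, so lowering `b = 0` to `b - 1` involves no truncated subtraction.
structure IsHarmonicEigen (a b : R) (v : MvPolynomial (Fin 4) R) : Prop where
  holEuler_eq : holEuler v = C a * v
  antiEuler_eq : antiEuler v = C b * v
  laplacian_eq_zero : laplacian v = 0

namespace IsHarmonicEigen

variable {a b : R} {v : MvPolynomial (Fin 4) R}

theorem zbar (h : IsHarmonicEigen a b v) : IsHarmonicEigen (a + 1) (b - 1) (Zbar v) where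
  holEuler_eq := by rw [holEuler_Zbar, h.holEuler_eq, Zbar_C_mul, C_add, C_1]; ring
  antiEuler_eq := by rw [antiEuler_Zbar, h.antiEuler_eq, Zbar_C_mul, C_sub, C_1]; ring
  laplacian_eq_zero := by rw [laplacian_Zbar, h.laplacian_eq_zero]; simp [Zbar]

theorem Z_Zbar (h : IsHarmonicEigen a b v) : Z (Zbar v) = C (-((a + 1) * b)) * v := by
  rw [Sphere3.Z_Zbar, h.laplacian_eq_zero, h.antiEuler_eq, holEuler_C_mul, h.holEuler_eq]
  simp only [C_neg, C_mul, C_add, C_1]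
  ring

theorem Z_Z_Zbar_Zbar (h : IsHarmonicEigen a b v) :
    Z (Z (Zbar (Zbar v))) = C ((a + 1) * (a + 2) * (b - 1) * b) * v := by
  rw [h.zbar.Z_Zbar, Z_C_mul, h.Z_Zbar, ← mul_assoc, ← C_mul]
  ring_nf

end IsHarmonicEigen

end Sphere3

/-- `(Z₁)²(Z_{1̄})²` acts on a harmonic polynomial of bidegree `(p,q)` by the
scalar `(p+1)(p+2)(q−1)q` modulo the ideal of the unit sphere; in particular it
vanishes (mod the ideal) when `q ≤ 1`, and is injective on `H_{p,q}` for `q ≥ 2`.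
Here `z = X 0`, `w = X 1`, `z̄ = X 2`, `w̄ = X 3`, `Z₁ = w̄∂_z − z̄∂_w`,
`Z_{1̄} = w∂_{z̄} − z∂_{w̄}`. -/
theorem stmt13 :
    letI Z1 : MvPolynomial (Fin 4) ℂ → MvPolynomial (Fin 4) ℂ :=
      fun v => X 3 * pderiv 0 v - X 2 * pderiv 1 v
    letI Z1b : MvPolynomial (Fin 4) ℂ → MvPolynomial (Fin 4) ℂ :=
      fun v => X 1 * pderiv 2 v - X 0 * pderiv 3 v
    letI sph : Ideal (MvPolynomial (Fin 4) ℂ) :=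
      Ideal.span {(X 0 * X 2 + X 1 * X 3 - 1 : MvPolynomial (Fin 4) ℂ)}
    ∀ (p q : ℕ) (u : MvPolynomial (Fin 4) ℂ),
      u.IsWeightedHomogeneous ![1, 1, 0, 0] p →
      u.IsWeightedHomogeneous ![0, 0, 1, 1] q →
      pderiv 2 (pderiv 0 u) + pderiv 3 (pderiv 1 u) = 0 →
      (Z1 (Z1 (Z1b (Z1b u)))
          - C ((((p:ℂ)+1) * ((p:ℂ)+2) * ((q:ℂ)-1) * (q:ℂ))) * u ∈ sph) ∧
      (q ≤ 1 → Z1 (Z1 (Z1b (Z1b u))) ∈ sph) ∧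
      (2 ≤ q → Z1 (Z1 (Z1b (Z1b u))) ∈ sph → u ∈ sph) := by
  intro p q u hp hq hΔ
  have hu : Sphere3.IsHarmonicEigen (p : ℂ) q u :=
    ⟨Sphere3.holEuler_eq_of_isWeightedHomogeneous hp,
      Sphere3.antiEuler_eq_of_isWeightedHomogeneous hq, hΔ⟩
  have key := hu.Z_Z_Zbar_Zbar
  simp only [Sphere3.Z, Sphere3.Zbar] at key
  beta_reduce
  rw [key]
  refine ⟨by simp, fun hq1 => ?_, fun hq2 hmem => ?_⟩
  · interval_cases q <;> simp
  · have hq_sub : (q : ℂ) - 1 ≠ 0 := sub_ne_zero.mpr (by exact_mod_cast (by omega : q ≠ 1))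
    have hc : ((p:ℂ)+1) * ((p:ℂ)+2) * ((q:ℂ)-1) * (q:ℂ) ≠ 0 :=
      mul_ne_zero (mul_ne_zero (mul_ne_zero (by norm_cast) (by norm_cast)) hq_sub)
        (by norm_cast; omega)
    exact (Ideal.unit_mul_mem_iff_mem _ (hc.isUnit.map C)).mp hmem
end
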